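/- arXiv:1512.07401 — 3 statements merged into one kernel-verified Lean document; each statement's English description precedes it below -/
import Mathlib

section
/- Suppose self-adjoint ±1-eigenvalue observables X_A, Y_A (anticommuting, acting on Alice's factor) and X'_B, Y'_B (acting on Bob's factor) satisfy ⟨ψ|(X_A X'_B + Y_A Y'_B)|ψ⟩ ≥ 2 - ε for a unit vector ψ with 0 < ε < 1. Then ‖(X'_B Y'_B + Y'_B X'_B)ψ‖ ≤ 8√ε. -/
/-!
Write `d_X = X'_B ψ - X_A ψ` and `d_Y = Y'_B ψ - Y_A ψ`. Since `X_A` is a self-adjoint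
isometry, `‖d_X‖² = 2 - 2 Re ⟨ψ, X_A X'_B ψ⟩`, and likewise for `d_Y`, so the hypothesis gives
`‖d_X‖² + ‖d_Y‖² ≤ 2ε`. Moving each of Bob's observables onto Alice's side costs one `d`:
`X'_B Y'_B ψ = Y_A X_A ψ + X'_B d_Y + Y_A d_X` and `Y'_B X'_B ψ = X_A Y_A ψ + Y'_B d_X + X_A d_Y`.
Summing, the anticommutation of `X_A` and `Y_A` cancels the main terms, leaving
`‖(X'_B Y'_B + Y'_B X'_B) ψ‖ ≤ 2 (‖d_X‖ + ‖d_Y‖) ≤ 4 √ε`.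
-/

lemma IsSelfAdjoint.mem_unitary_of_mul_self_eq_one {R : Type*} [Monoid R] [StarMul R] {A : R}
    (hA : IsSelfAdjoint A) (hA2 : A * A = 1) : A ∈ unitary R :=
  Unitary.mem_iff.2 ⟨by rw [hA.star_eq, hA2], by rw [hA.star_eq, hA2]⟩

lemma add_le_sqrt_two_mul_of_sq_add_sq_le {s t c : ℝ} (h : s ^ 2 + t ^ 2 ≤ c) : s + t ≤ √(2 * c) :=
  Real.le_sqrt_of_sq_le (by nlinarith [sq_nonneg (s - t)])

namespace ContinuousLinearMap

lemma norm_apply_sub_apply_sq {𝕜 E : Type*} [RCLike 𝕜] [NormedAddCommGroup E]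
    [InnerProductSpace 𝕜 E] [CompleteSpace E] {A : E →L[𝕜] E} (hA : IsSelfAdjoint A)
    (B : E →L[𝕜] E) (v : E) :
    ‖B v - A v‖ ^ 2 = ‖B v‖ ^ 2 + ‖A v‖ ^ 2 - 2 * RCLike.re (inner 𝕜 v ((A * B) v)) := by
  have hsymm : inner 𝕜 (A v) (B v) = inner 𝕜 v (A (B v)) := hA.isSymmetric v (B v)
  rw [norm_sub_sq (𝕜 := 𝕜), inner_re_symm, mul_apply_eq_comp, hsymm]
  ring

lemma norm_anticommutator_apply_le {𝕜 E : Type*} [NontriviallyNormedField 𝕜]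
    [SeminormedAddCommGroup E] [NormedSpace 𝕜 E] {XA YA XB YB : E →L[𝕜] E}
    (hXA : ∀ v, ‖XA v‖ ≤ ‖v‖) (hYA : ∀ v, ‖YA v‖ ≤ ‖v‖)
    (hXB : ∀ v, ‖XB v‖ ≤ ‖v‖) (hYB : ∀ v, ‖YB v‖ ≤ ‖v‖)
    (hanti : XA * YA + YA * XA = 0) (hcXY : XA * YB = YB * XA) (hcYX : YA * XB = XB * YA)
    (ψ : E) :
    ‖(XB * YB + YB * XB) ψ‖ ≤ 2 * (‖XB ψ - XA ψ‖ + ‖YB ψ - YA ψ‖) := by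
  set dX := XB ψ - XA ψ
  set dY := YB ψ - YA ψ
  have hdecomp : (XB * YB + YB * XB) ψ = (XB dY + YA dX) + (YB dX + XA dY) := by
    have hcancel : YA (XA ψ) = -XA (YA ψ) := by
      simpa only [add_apply, mul_apply_eq_comp, zero_apply, add_eq_zero_iff_eq_neg']
        using congr($hanti ψ)
    have hXBYA : XB (YA ψ) = YA (XB ψ) := by
      simpa only [mul_apply_eq_comp] using congr($hcYX ψ).symm
    have hYBXA : YB (XA ψ) = XA (YB ψ) := by
      simpa only [mul_apply_eq_comp] using congr($hcXY ψ).symm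
    simp only [dX, dY, map_sub, add_apply, mul_apply_eq_comp, hXBYA, hYBXA, hcancel]
    abel
  calc ‖(XB * YB + YB * XB) ψ‖ = ‖(XB dY + YA dX) + (YB dX + XA dY)‖ := by rw [hdecomp]
    _ ≤ ‖XB dY‖ + ‖YA dX‖ + (‖YB dX‖ + ‖XA dY‖) :=
      (norm_add_le _ _).trans (add_le_add (norm_add_le _ _) (norm_add_le _ _))
    _ ≤ ‖dY‖ + ‖dX‖ + (‖dX‖ + ‖dY‖) := by gcongr <;> apply_assumption
    _ = 2 * (‖dX‖ + ‖dY‖) := by ring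

end ContinuousLinearMap

open ContinuousLinearMap in
theorem stmt_3_general {H : Type*} [NormedAddCommGroup H] [InnerProductSpace ℂ H] [CompleteSpace H]
    (XA YA XB YB : H →L[ℂ] H)
    (hXA : IsSelfAdjoint XA) (hYA : IsSelfAdjoint YA)
    (hXB : IsSelfAdjoint XB) (hYB : IsSelfAdjoint YB)
    (hXA2 : XA * XA = 1) (hYA2 : YA * YA = 1)
    (hXB2 : XB * XB = 1) (hYB2 : YB * YB = 1)
    (hanti : XA * YA + YA * XA = 0)
    (hcXY : XA * YB = YB * XA)
    (hcYX : YA * XB = XB * YA)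
    (ψ : H) (hψ : ‖ψ‖ = 1) (ε : ℝ)
    (h : 2 - ε ≤ (inner ℂ ψ (((XA * XB + YA * YB) : H →L[ℂ] H) ψ) : ℂ).re) :
    ‖((XB * YB + YB * XB) : H →L[ℂ] H) ψ‖ ≤ 8 * Real.sqrt ε := by
  have hiso : ∀ A : H →L[ℂ] H, IsSelfAdjoint A → A * A = 1 → ∀ v, ‖A v‖ = ‖v‖ :=
    fun A hA hA2 => norm_map_of_mem_unitary (hA.mem_unitary_of_mul_self_eq_one hA2)
  have hdX := norm_apply_sub_apply_sq hXA XB ψ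
  have hdY := norm_apply_sub_apply_sq hYA YB ψ
  rw [hiso XB hXB hXB2, hiso XA hXA hXA2, hψ, RCLike.re_to_complex] at hdX
  rw [hiso YB hYB hYB2, hiso YA hYA hYA2, hψ, RCLike.re_to_complex] at hdY
  rw [add_apply, inner_add_right, Complex.add_re] at h
  have hsum : ‖XB ψ - XA ψ‖ ^ 2 + ‖YB ψ - YA ψ‖ ^ 2 ≤ 2 * ε := by linarith
  calc ‖(XB * YB + YB * XB) ψ‖ ≤ 2 * (‖XB ψ - XA ψ‖ + ‖YB ψ - YA ψ‖) :=
        norm_anticommutator_apply_le (fun v => (hiso XA hXA hXA2 v).le)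
          (fun v => (hiso YA hYA hYA2 v).le) (fun v => (hiso XB hXB hXB2 v).le)
          (fun v => (hiso YB hYB hYB2 v).le) hanti hcXY hcYX ψ
    _ ≤ 2 * √(2 * (2 * ε)) := by gcongr; exact add_le_sqrt_two_mul_of_sq_add_sq_le hsum
    _ = 4 * √ε := by
      rw [show 2 * (2 * ε) = 2 ^ 2 * ε by ring, Real.sqrt_mul (by positivity),
        Real.sqrt_sq zero_le_two]
      ring
    _ ≤ 8 * √ε := by linarith [Real.sqrt_nonneg ε]

/-- Suppose self-adjoint ±1-eigenvalue observables X_A, Y_A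
(anticommuting, acting on Alice's factor) and X'_B, Y'_B (acting on Bob's factor,
hence commuting with Alice's observables) satisfy
⟨ψ|(X_A X'_B + Y_A Y'_B)|ψ⟩ ≥ 2 - ε for a unit vector ψ with 0 < ε < 1.
Then ‖(X'_B Y'_B + Y'_B X'_B)ψ‖ ≤ 8√ε. -/
theorem stmt_3 {H : Type*} [NormedAddCommGroup H] [InnerProductSpace ℂ H] [CompleteSpace H]
    (XA YA XB YB : H →L[ℂ] H)
    (hXA : IsSelfAdjoint XA) (hYA : IsSelfAdjoint YA)
    (hXB : IsSelfAdjoint XB) (hYB : IsSelfAdjoint YB)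
    (hXA2 : XA * XA = 1) (hYA2 : YA * YA = 1)
    (hXB2 : XB * XB = 1) (hYB2 : YB * YB = 1)
    (hanti : XA * YA + YA * XA = 0)
    (hcXX : XA * XB = XB * XA) (hcXY : XA * YB = YB * XA)
    (hcYX : YA * XB = XB * YA) (hcYY : YA * YB = YB * YA)
    (ψ : H) (hψ : ‖ψ‖ = 1) (ε : ℝ) (hε0 : 0 < ε) (hε1 : ε < 1)
    (h : 2 - ε ≤ (inner ℂ ψ (((XA * XB + YA * YB) : H →L[ℂ] H) ψ) : ℂ).re) :
    ‖((XB * YB + YB * XB) : H →L[ℂ] H) ψ‖ ≤ 8 * Real.sqrt ε :=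
  stmt_3_general XA YA XB YB hXA hYA hXB hYB hXA2 hYA2 hXB2 hYB2 hanti hcXY hcYX ψ hψ ε h
end

section
/- With ε' = ε/2, the state |ψ⟩ = (1/√2)(√(1+√ε')|01⟩ + √(1-√ε')|10⟩) and observables B₀ = [[-√ε', √(1-ε')],[√(1-ε'), √ε']], B₁ = [[0, √ε' - i√(1-ε')],[√ε' + i√(1-ε'), 0]] satisfy ⟨ψ|(X⊗B₀ + Y⊗B₁)|ψ⟩ = 2 - ε. -/
open Matrix Complex Kronecker

/-- Pauli X. -/
def pauliX : Matrix (Fin 2) (Fin 2) ℂ := !![0, 1; 1, 0]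

/-- Pauli Y. -/
def pauliY : Matrix (Fin 2) (Fin 2) ℂ := !![0, -Complex.I; Complex.I, 0]

/-- With ε' = ε/2, the state
|ψ⟩ = (1/√2)(√(1+√ε')|01⟩ + √(1-√ε')|10⟩) and the observables
B₀ = [[-√ε', √(1-ε')],[√(1-ε'), √ε']],
B₁ = [[0, √ε' - i√(1-ε')],[√ε' + i√(1-ε'), 0]]
satisfy ⟨ψ|(X⊗B₀ + Y⊗B₁)|ψ⟩ = 2 - ε. -/
theorem stmt_8 (ε : ℝ) (hε0 : 0 < ε) (hε1 : ε < 1) :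
    let ε' : ℝ := ε / 2
    let B₀ : Matrix (Fin 2) (Fin 2) ℂ :=
      !![(-(Real.sqrt ε') : ℝ), ((Real.sqrt (1 - ε') : ℝ) : ℂ);
         ((Real.sqrt (1 - ε') : ℝ) : ℂ), ((Real.sqrt ε' : ℝ) : ℂ)]
    let B₁ : Matrix (Fin 2) (Fin 2) ℂ :=
      !![0, ((Real.sqrt ε' : ℝ) : ℂ) - Complex.I * ((Real.sqrt (1 - ε') : ℝ) : ℂ);
         ((Real.sqrt ε' : ℝ) : ℂ) + Complex.I * ((Real.sqrt (1 - ε') : ℝ) : ℂ), 0]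
    let ψ : Fin 2 × Fin 2 → ℂ := fun p =>
      if p = (0, 1) then ((Real.sqrt (1 + Real.sqrt ε') / Real.sqrt 2 : ℝ) : ℂ)
      else if p = (1, 0) then ((Real.sqrt (1 - Real.sqrt ε') / Real.sqrt 2 : ℝ) : ℂ)
      else 0
    star ψ ⬝ᵥ ((pauliX ⊗ₖ B₀ + pauliY ⊗ₖ B₁) *ᵥ ψ) = ((2 - ε : ℝ) : ℂ) := by
  intro ε' B₀ B₁ ψ
  simp only [dotProduct, mulVec, Fintype.sum_prod_type, Fin.sum_univ_two,
    Matrix.add_apply, Matrix.kroneckerMap_apply, pauliX, pauliY,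
    Matrix.cons_val', Matrix.cons_val_zero, Matrix.cons_val_one, Matrix.head_cons,
    Matrix.empty_val', Matrix.cons_val_fin_one, Matrix.head_fin_const,
    Pi.star_apply, B₀, B₁, ψ]
  norm_num [Prod.ext_iff]
  have hε' : (0:ℝ) ≤ ε/2 := by linarith
  have h1e : (0:ℝ) ≤ 1 - ε/2 := by linarith
  have hsε : Real.sqrt (ε/2) ≤ 1 := by
    rw [show (1:ℝ) = Real.sqrt 1 by simp]
    exact Real.sqrt_le_sqrt (by linarith)
  have e1 : ((Real.sqrt (1+Real.sqrt ε') : ℝ) : ℂ) * (Real.sqrt (1-Real.sqrt ε') : ℝ) = (Real.sqrt (1-ε') : ℝ) := by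
    norm_cast
    rw [← Real.sqrt_mul (by positivity)]
    congr 1
    have := Real.sq_sqrt hε'
    simp only [ε']
    nlinarith [Real.sq_sqrt hε']
  have e2 : ((Real.sqrt (1-ε') : ℝ) : ℂ) * (Real.sqrt (1-ε') : ℝ) = ((1-ε' : ℝ) : ℂ) := by
    norm_cast
    exact Real.mul_self_sqrt h1e
  have e3 : ((Real.sqrt 2 : ℝ) : ℂ) * (Real.sqrt 2 : ℝ) = 2 := by
    norm_cast
    exact Real.mul_self_sqrt (by norm_num)
  have hs : ((Real.sqrt 2 : ℝ) : ℂ) ≠ 0 := by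
    norm_cast
    positivity
  field_simp
  push_cast at e2
  have hE : ((ε':ℝ):ℂ) = (ε:ℂ)/2 := by push_cast [ε']; ring
  linear_combination ((-2:ℂ)*(Real.sqrt (1+Real.sqrt ε'):ℝ)*((Real.sqrt (1-ε'):ℝ):ℂ)*((Real.sqrt (1-Real.sqrt ε'):ℝ):ℂ)) * Complex.I_sq + (-4:ℂ)*hE + (4*((Real.sqrt (1-ε') : ℝ) : ℂ)) * e1 + 4*e2 + ((ε:ℂ)-2)*e3
end

section
/- (Gentle measurement corollary) Let ρ be a density operator on H₁ ⊗ H₂ and π = |φ⟩⟨φ| a pure state on H₁. If Tr(π · Tr₂(ρ)) ≥ 1 - δ for some δ ≥ 0, then TD(ρ, π ⊗ Tr₁(ρ)) ≤ 2√δ + δ. -/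
open Matrix ComplexOrder Kronecker

/-- The trace distance TD(ρ,σ) = (1/2)Tr|ρ-σ|, where |A| = √(Aᴴ A). -/
noncomputable def traceDist {n : Type*} [Fintype n] [DecidableEq n]
    (ρ σ : Matrix n n ℂ) : ℝ :=
  (1 / 2) * (((Matrix.posSemidef_conjTranspose_mul_self (ρ - σ)).1.eigenvectorUnitary.1 *
    Matrix.diagonal (((↑) : ℝ → ℂ) ∘ Real.sqrt ∘
      (Matrix.posSemidef_conjTranspose_mul_self (ρ - σ)).1.eigenvalues) *
    (star (Matrix.posSemidef_conjTranspose_mul_self (ρ - σ)).1.eigenvectorUnitary :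
      Matrix n n ℂ)).trace).re

/-- Partial trace over the second tensor factor. -/
noncomputable def ptrace2 {m k : Type*} [Fintype k]
    (ρ : Matrix (m × k) (m × k) ℂ) : Matrix m m ℂ :=
  Matrix.of fun i j => ∑ a : k, ρ (i, a) (j, a)

/-- Partial trace over the first tensor factor. -/
noncomputable def ptrace1 {m k : Type*} [Fintype m]
    (ρ : Matrix (m × k) (m × k) ℂ) : Matrix k k ℂ :=
  Matrix.of fun i j => ∑ a : m, ρ (a, i) (a, j)

/-! The trace distance is attained by a projection: if `M` is the spectral projection of `ρ - σ`
onto its positive part, then `TD(ρ, σ) = Re Tr M(ρ - σ)`. With `P = π ⊗ 1` one has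
`π ⊗ Tr₁ ρ = PρP + π ⊗ Tr₁((1 - P)ρ(1 - P))`, and the second summand is positive, so
`TD(ρ, π ⊗ Tr₁ ρ) ≤ Re Tr M(ρ - PρP)`. Finally `ρ - PρP = (1 - P)ρ + Pρ(1 - P)`, and Cauchy–Schwarz
for the semi-inner product `⟨X, Y⟩ = Tr(Y ρ Xᴴ)` bounds each term by `√Tr((1 - P)ρ) ≤ √δ`. -/

namespace Matrix

section TraceInequalities

variable {n 𝕜 : Type*} [Fintype n] [RCLike 𝕜]

theorem PosSemidef.re_trace_nonneg {A : Matrix n n 𝕜} (hA : A.PosSemidef) :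
    0 ≤ RCLike.re A.trace :=
  (RCLike.nonneg_iff.mp hA.trace_nonneg).1

/-- Cauchy–Schwarz for the semi-inner product `⟪X, Y⟫ = tr (Y ρ Xᴴ)` induced by `ρ`. -/
theorem PosSemidef.re_trace_mul_mul_le {ρ : Matrix n n 𝕜} (hρ : ρ.PosSemidef)
    (A B : Matrix n n 𝕜) :
    RCLike.re (A * ρ * B).trace ≤
      √(RCLike.re (A * ρ * Aᴴ).trace) * √(RCLike.re (Bᴴ * ρ * B).trace) := by
  let := ρ.toMatrixSeminormedAddCommGroup hρ
  let := ρ.toMatrixInnerProductSpace hρ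
  have hnorm : ∀ X : Matrix n n 𝕜, ‖X‖ = √(RCLike.re (X * ρ * Xᴴ).trace) := fun X => by
    rw [norm_eq_sqrt_re_inner (𝕜 := 𝕜)]; rfl
  have hinner : inner 𝕜 Bᴴ A = (A * ρ * B).trace := by
    change (A * ρ * Bᴴᴴ).trace = _; rw [conjTranspose_conjTranspose]
  calc RCLike.re (A * ρ * B).trace ≤ ‖inner 𝕜 Bᴴ A‖ := hinner ▸ RCLike.re_le_norm _
    _ ≤ ‖Bᴴ‖ * ‖A‖ := norm_inner_le_norm _ _
    _ = _ := by rw [hnorm, hnorm, conjTranspose_conjTranspose, mul_comm]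

variable {p : Matrix n n 𝕜}

theorem _root_.IsStarProjection.re_trace_mul_nonneg (hp : IsStarProjection p)
    {X : Matrix n n 𝕜} (hX : X.PosSemidef) : 0 ≤ RCLike.re (p * X).trace := by
  have h := (hX.mul_mul_conjTranspose_same p).re_trace_nonneg
  rwa [← star_eq_conjTranspose, hp.isSelfAdjoint.star_eq, trace_mul_cycle, hp.isIdempotentElem.eq]
    at h

variable [DecidableEq n]

theorem _root_.IsStarProjection.re_trace_mul_mul_le (hp : IsStarProjection p)
    {X : Matrix n n 𝕜} (hX : X.PosSemidef) : RCLike.re (p * X * p).trace ≤ RCLike.re X.trace := by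
  have h := hp.one_sub.re_trace_mul_nonneg hX
  rw [trace_mul_cycle, hp.isIdempotentElem.eq]
  rw [sub_mul, one_mul, trace_sub, map_sub] at h
  linarith

theorem _root_.IsStarProjection.re_trace_mul_sub_mul_mul_le
    {q ρ : Matrix n n 𝕜} (hp : IsStarProjection p) (hq : IsStarProjection q)
    (hρ : ρ.PosSemidef) :
    RCLike.re (q * (ρ - p * ρ * p)).trace ≤
      2 * √(RCLike.re ρ.trace) * √(RCLike.re ((1 - p) * ρ).trace) := by
  have hr := hp.one_sub
  have hpH : pᴴ = p := hp.isSelfAdjoint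
  have hrH : (1 - p)ᴴ = 1 - p := hr.isSelfAdjoint
  have hpρp : RCLike.re (p * ρ * p).trace ≤ RCLike.re ρ.trace := hp.re_trace_mul_mul_le hρ
  have hrρr : RCLike.re ((1 - p) * ρ * (1 - p)).trace = RCLike.re ((1 - p) * ρ).trace := by
    rw [trace_mul_cycle, hr.isIdempotentElem.eq]
  have hq_conj : ∀ s : Matrix n n 𝕜, sᴴ = s →
      RCLike.re (q * s * ρ * (q * s)ᴴ).trace ≤ RCLike.re (s * ρ * s).trace := fun s hs => by
    have hsρs : (s * ρ * s).PosSemidef := by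
      simpa only [hs] using hρ.mul_mul_conjTranspose_same s
    have := hq.re_trace_mul_mul_le hsρs
    rw [conjTranspose_mul, hs, show qᴴ = q from hq.isSelfAdjoint]
    simpa only [mul_assoc] using this
  have h₁ : RCLike.re (q * (1 - p) * ρ * 1).trace ≤
      √(RCLike.re ((1 - p) * ρ).trace) * √(RCLike.re ρ.trace) := by
    refine (hρ.re_trace_mul_mul_le _ _).trans ?_
    rw [conjTranspose_one, one_mul, mul_one, ← hrρr]
    exact mul_le_mul_of_nonneg_right (Real.sqrt_le_sqrt (hq_conj _ hrH)) (Real.sqrt_nonneg _)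
  have h₂ : RCLike.re (q * p * ρ * (1 - p)).trace ≤
      √(RCLike.re ρ.trace) * √(RCLike.re ((1 - p) * ρ).trace) := by
    refine (hρ.re_trace_mul_mul_le _ _).trans ?_
    rw [hrH, hrρr]
    exact mul_le_mul_of_nonneg_right (Real.sqrt_le_sqrt ((hq_conj _ hpH).trans hpρp))
      (Real.sqrt_nonneg _)
  have hsplit : q * (ρ - p * ρ * p) = q * (1 - p) * ρ * 1 + q * p * ρ * (1 - p) := by
    noncomm_ring
  rw [hsplit, trace_add, map_add]
  linarith

end TraceInequalities

section FunctionalCalculus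

variable {n 𝕜 : Type*} [Fintype n] [DecidableEq n] [RCLike 𝕜]

theorem continuousOn_spectrum_real (A : Matrix n n 𝕜) (f : ℝ → ℝ) :
    ContinuousOn f (spectrum ℝ A) :=
  A.finite_real_spectrum.continuousOn f

theorem IsHermitian.cfc_sqrt_conjTranspose_mul_self {H : Matrix n n 𝕜} (hH : H.IsHermitian) :
    cfc Real.sqrt (Hᴴ * H) = cfc (fun x : ℝ => |x|) H := by
  have hsq : Hᴴ * H = cfc (fun x : ℝ => x * x) H := by
    rw [cfc_mul _ _ H (H.continuousOn_spectrum_real _) (H.continuousOn_spectrum_real _),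
      cfc_id' ℝ H, hH.eq]
  rw [hsq, ← cfc_comp _ _ H hH.isSelfAdjoint ((H.finite_real_spectrum.image _).continuousOn _)
    (H.continuousOn_spectrum_real _)]
  congr 1
  ext x
  exact Real.sqrt_mul_self_eq_abs x

theorem isStarProjection_cfc_pos_indicator (H : Matrix n n 𝕜) :
    IsStarProjection (cfc (fun x : ℝ => if 0 < x then (1 : ℝ) else 0) H) where
  isIdempotentElem := by
    rw [IsIdempotentElem, ← cfc_mul _ _ H (H.continuousOn_spectrum_real _)
      (H.continuousOn_spectrum_real _)]
    congr 1
    ext x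
    split_ifs <;> norm_num
  isSelfAdjoint := cfc_predicate _ H

theorem IsHermitian.cfc_abs_eq {H : Matrix n n 𝕜} (hH : H.IsHermitian) :
    cfc (fun x : ℝ => |x|) H =
      (2 : ℝ) • (cfc (fun x : ℝ => if 0 < x then (1 : ℝ) else 0) H * H) - H := by
  have habs : (fun x : ℝ => |x|) =
      fun x => 2 * ((if 0 < x then (1 : ℝ) else 0) * x) - x := by
    ext x
    split_ifs with hx
    · rw [abs_of_pos hx]; ring
    · rw [abs_of_nonpos (not_lt.mp hx)]; ring
  rw [habs, cfc_sub _ _ H (H.continuousOn_spectrum_real _) (H.continuousOn_spectrum_real _),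
    cfc_const_mul _ _ H (H.continuousOn_spectrum_real _),
    cfc_mul _ _ H (H.continuousOn_spectrum_real _) (H.continuousOn_spectrum_real _),
    cfc_id' ℝ H]

end FunctionalCalculus

section Projections

variable {m k R : Type*} [Fintype m] [CommSemiring R] [StarRing R]

theorem isStarProjection_vecMulVec_star {φ : m → R} (hφ : star φ ⬝ᵥ φ = 1) :
    IsStarProjection (vecMulVec φ (star φ)) where
  isIdempotentElem := by rw [IsIdempotentElem, vecMulVec_mul_vecMulVec, hφ, one_smul]
  isSelfAdjoint := by
    rw [IsSelfAdjoint, star_eq_conjTranspose, conjTranspose_vecMulVec, star_star]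

theorem _root_.IsStarProjection.kronecker_one [Fintype k] [DecidableEq k] {A : Matrix m m R}
    (hA : IsStarProjection A) : IsStarProjection (A ⊗ₖ (1 : Matrix k k R)) where
  isIdempotentElem := by
    rw [IsIdempotentElem, ← mul_kronecker_mul, hA.isIdempotentElem.eq, mul_one]
  isSelfAdjoint := by
    rw [IsSelfAdjoint, star_eq_conjTranspose, conjTranspose_kronecker, conjTranspose_one,
      ← star_eq_conjTranspose, hA.isSelfAdjoint.star_eq]

end Projections

section PartialTrace

variable {m k : Type*} [Fintype m]

theorem ptrace1_add (X Y : Matrix (m × k) (m × k) ℂ) :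
    ptrace1 (X + Y) = ptrace1 X + ptrace1 Y := by
  ext a b
  simp [ptrace1, Finset.sum_add_distrib]

theorem ptrace1_sub (X Y : Matrix (m × k) (m × k) ℂ) :
    ptrace1 (X - Y) = ptrace1 X - ptrace1 Y := by
  ext a b
  simp [ptrace1, Finset.sum_sub_distrib]

theorem ptrace1_kronecker (A : Matrix m m ℂ) (B : Matrix k k ℂ) :
    ptrace1 (A ⊗ₖ B) = A.trace • B := by
  ext a b
  simp [ptrace1, trace, Finset.sum_mul]

theorem ptrace1_eq_sum_submatrix (X : Matrix (m × k) (m × k) ℂ) :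
    ptrace1 X = ∑ i, X.submatrix (Prod.mk i) (Prod.mk i) := by
  ext a b
  simp [ptrace1, sum_apply]

theorem PosSemidef.ptrace1 {X : Matrix (m × k) (m × k) ℂ} (hX : X.PosSemidef) :
    (ptrace1 X).PosSemidef := by
  rw [ptrace1_eq_sum_submatrix]
  exact posSemidef_sum _ fun i _ => hX.submatrix _

variable [Fintype k]

theorem trace_ptrace1 (X : Matrix (m × k) (m × k) ℂ) : (ptrace1 X).trace = X.trace := by
  simp only [trace, diag, ptrace1, of_apply, Fintype.sum_prod_type]
  exact Finset.sum_comm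

variable [DecidableEq k]

theorem ptrace1_kronecker_one_mul (A : Matrix m m ℂ) (X : Matrix (m × k) (m × k) ℂ) :
    ptrace1 ((A ⊗ₖ (1 : Matrix k k ℂ)) * X) = ptrace1 (X * (A ⊗ₖ (1 : Matrix k k ℂ))) := by
  ext a b
  simp only [ptrace1, mul_apply, kroneckerMap_apply, one_apply, mul_ite, mul_one, mul_zero,
    ite_mul, zero_mul, Fintype.sum_prod_type, Finset.sum_ite_eq, Finset.mem_univ, ↓reduceIte,
    of_apply, Finset.sum_ite_eq']
  rw [Finset.sum_comm]
  exact Finset.sum_congr rfl fun _ _ => Finset.sum_congr rfl fun _ _ => mul_comm _ _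

theorem trace_kronecker_one_mul (A : Matrix m m ℂ) (X : Matrix (m × k) (m × k) ℂ) :
    ((A ⊗ₖ (1 : Matrix k k ℂ)) * X).trace = (A * ptrace2 X).trace := by
  simp only [trace, diag_apply, mul_apply, kroneckerMap_apply, one_apply, mul_ite, mul_one,
    mul_zero, ite_mul, zero_mul, Fintype.sum_prod_type, Finset.sum_ite_eq, Finset.mem_univ,
    ↓reduceIte, ptrace2, of_apply, Finset.mul_sum]
  exact Finset.sum_congr rfl fun _ _ => Finset.sum_comm

theorem vecMulVec_kronecker_one_mul_mul (u v w z : m → ℂ) (X : Matrix (m × k) (m × k) ℂ) :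
    (vecMulVec u v ⊗ₖ (1 : Matrix k k ℂ)) * X * (vecMulVec w z ⊗ₖ (1 : Matrix k k ℂ)) =
      vecMulVec u z ⊗ₖ of fun a b => ∑ i, ∑ j, v i * X (i, a) (j, b) * w j := by
  ext ⟨i, a⟩ ⟨j, b⟩
  simp only [mul_apply, kroneckerMap_apply, vecMulVec_apply, one_apply, mul_ite, mul_one,
    mul_zero, ite_mul, zero_mul, Fintype.sum_prod_type, Finset.sum_ite_eq, Finset.mem_univ,
    ↓reduceIte, Finset.sum_mul, Finset.sum_ite_eq', of_apply, Finset.mul_sum]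
  rw [Finset.sum_comm]
  exact Finset.sum_congr rfl fun _ _ => Finset.sum_congr rfl fun _ _ => by ring

theorem ptrace1_add_ptrace1_one_sub [DecidableEq m] {A : Matrix m m ℂ} (hA : IsIdempotentElem A)
    (X : Matrix (m × k) (m × k) ℂ) :
    ptrace1 ((A ⊗ₖ (1 : Matrix k k ℂ)) * X * (A ⊗ₖ 1)) +
      ptrace1 ((1 - A ⊗ₖ (1 : Matrix k k ℂ)) * X * (1 - A ⊗ₖ 1)) = ptrace1 X := by
  set P := A ⊗ₖ (1 : Matrix k k ℂ)
  have hPP : P * P = P := by rw [← mul_kronecker_mul, hA.eq, mul_one]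
  have hPXP : ptrace1 (P * X * P) = ptrace1 (X * P) := by
    rw [mul_assoc, ptrace1_kronecker_one_mul, mul_assoc, hPP]
  have hexpand : (1 - P) * X * (1 - P) = X - P * X - X * P + P * X * P := by noncomm_ring
  rw [hexpand, ptrace1_add, ptrace1_sub, ptrace1_sub, ptrace1_kronecker_one_mul, hPXP]
  abel

theorem vecMulVec_kronecker_ptrace1 [DecidableEq m] {φ : m → ℂ} (hφ : star φ ⬝ᵥ φ = 1)
    (X : Matrix (m × k) (m × k) ℂ) :
    vecMulVec φ (star φ) ⊗ₖ ptrace1 X =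
      (vecMulVec φ (star φ) ⊗ₖ (1 : Matrix k k ℂ)) * X * (vecMulVec φ (star φ) ⊗ₖ 1) +
        vecMulVec φ (star φ) ⊗ₖ
          ptrace1 ((1 - vecMulVec φ (star φ) ⊗ₖ (1 : Matrix k k ℂ)) * X *
            (1 - vecMulVec φ (star φ) ⊗ₖ 1)) := by
  have htr : (vecMulVec φ (star φ)).trace = 1 := by rw [trace_vecMulVec, dotProduct_comm, hφ]
  conv_lhs =>
    rw [← ptrace1_add_ptrace1_one_sub (isStarProjection_vecMulVec_star hφ).isIdempotentElem X]
  rw [kronecker_add, vecMulVec_kronecker_one_mul_mul, ptrace1_kronecker, htr, one_smul]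

end PartialTrace

end Matrix

theorem traceDist_eq_re_trace_cfc_abs {n : Type*} [Fintype n] [DecidableEq n]
    {ρ σ : Matrix n n ℂ} (h : (ρ - σ).IsHermitian) :
    traceDist ρ σ = 1 / 2 * (cfc (fun x : ℝ => |x|) (ρ - σ)).trace.re := by
  rw [← h.cfc_sqrt_conjTranspose_mul_self, IsHermitian.cfc_eq _ Real.sqrt]
  rfl

theorem exists_isStarProjection_traceDist_eq {n : Type*} [Fintype n] [DecidableEq n]
    {ρ σ : Matrix n n ℂ} (h : (ρ - σ).IsHermitian) (htr : ρ.trace = σ.trace) :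
    ∃ p : Matrix n n ℂ, IsStarProjection p ∧ traceDist ρ σ = (p * (ρ - σ)).trace.re := by
  refine ⟨_, isStarProjection_cfc_pos_indicator (ρ - σ), ?_⟩
  rw [traceDist_eq_re_trace_cfc_abs h, h.cfc_abs_eq, trace_sub, trace_smul, trace_sub, htr,
    sub_self, sub_zero, Complex.real_smul, Complex.re_ofReal_mul]
  ring

/-- Gentle measurement corollary: Let ρ be a density operator on
H₁ ⊗ H₂ and π = |φ⟩⟨φ| a pure state on H₁. If Tr(π · Tr₂(ρ)) ≥ 1 - δ for some δ ≥ 0,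
then TD(ρ, π ⊗ Tr₁(ρ)) ≤ 2√δ + δ. -/
theorem stmt_14 {d₁ d₂ : ℕ}
    (ρ : Matrix (Fin d₁ × Fin d₂) (Fin d₁ × Fin d₂) ℂ)
    (hρ : ρ.PosSemidef) (htr : ρ.trace = 1)
    (φ : Fin d₁ → ℂ) (hφ : star φ ⬝ᵥ φ = 1) (δ : ℝ) (hδ : 0 ≤ δ)
    (h : 1 - δ ≤ ((Matrix.vecMulVec φ (star φ) * ptrace2 ρ).trace).re) :
    traceDist ρ (Matrix.vecMulVec φ (star φ) ⊗ₖ ptrace1 ρ)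
      ≤ 2 * Real.sqrt δ + δ := by
  have hsplit := vecMulVec_kronecker_ptrace1 hφ ρ
  set π := vecMulVec φ (star φ)
  set P := π ⊗ₖ (1 : Matrix (Fin d₂) (Fin d₂) ℂ)
  have hP : IsStarProjection P := (isStarProjection_vecMulVec_star hφ).kronecker_one
  have hσ : (π ⊗ₖ ptrace1 ρ).PosSemidef :=
    (posSemidef_vecMulVec_self_star φ).kronecker hρ.ptrace1
  have hrest : (π ⊗ₖ ptrace1 ((1 - P) * ρ * (1 - P))).PosSemidef := by
    have hQρQ := hρ.mul_mul_conjTranspose_same (1 - P)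
    rw [show (1 - P)ᴴ = 1 - P from hP.one_sub.isSelfAdjoint] at hQρQ
    exact (posSemidef_vecMulVec_self_star φ).kronecker hQρQ.ptrace1
  have htrσ : ρ.trace = (π ⊗ₖ ptrace1 ρ).trace := by
    rw [trace_kronecker, trace_ptrace1, htr, trace_vecMulVec, dotProduct_comm, hφ, one_mul]
  obtain ⟨M, hM, hTD⟩ := exists_isStarProjection_traceDist_eq (hρ.1.sub hσ.1) htrσ
  have hfail : ((1 - P) * ρ).trace.re ≤ δ := by
    rw [sub_mul, one_mul, trace_sub, trace_kronecker_one_mul, htr, Complex.sub_re, Complex.one_re]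
    linarith
  have hgentle := hP.re_trace_mul_sub_mul_mul_le hM hρ
  have hpos := hM.re_trace_mul_nonneg hrest
  rw [htr, RCLike.one_re, Real.sqrt_one, mul_one] at hgentle
  simp only [RCLike.re_to_complex] at hgentle hpos
  rw [hTD, hsplit, ← sub_sub, mul_sub, trace_sub, Complex.sub_re]
  linarith [Real.sqrt_le_sqrt hfail]
end
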